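/- For density operators ρ, σ on a finite-dimensional Hilbert space A with supp(ρ) ⊆ supp(σ), and a quantum channel N from A to B with isometric extension U : A → B⊗E, the quantity −2 log‖([N(ρ)]^{1/2}[N(σ)]^{−1/2} ⊗ id_E) U σ^{1/2} ρ^{1/2}‖₁ equals −2 log F(ρ, P_{σ,N}(N(ρ))), where P_{σ,N} is the Petz recovery map for σ and N. -/

import Mathlib

open scoped ENNReal Kronecker ComplexOrder
open Matrix MeasureTheory

/-- Apply a real function to a Hermitian matrix via the spectral decomposition
(junk value `0` if the matrix is not Hermitian). -/
noncomputable def mfun {n : Type*} [Fintype n] [DecidableEq n] (f : ℝ → ℂ)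
    (M : Matrix n n ℂ) : Matrix n n ℂ :=
  if h : M.IsHermitian then
    (h.eigenvectorUnitary : Matrix n n ℂ) *
      Matrix.diagonal (fun i => f (h.eigenvalues i)) *
      (star (h.eigenvectorUnitary : Matrix n n ℂ))
  else 0

/-- Matrix square root of a positive semidefinite matrix. -/
noncomputable def msqrt {n : Type*} [Fintype n] [DecidableEq n] (M : Matrix n n ℂ) :
    Matrix n n ℂ :=
  mfun (fun x => (Real.sqrt x : ℂ)) M

/-- Inverse square root, taken on the support. -/
noncomputable def minvsqrt {n : Type*} [Fintype n] [DecidableEq n] (M : Matrix n n ℂ) :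
    Matrix n n ℂ :=
  mfun (fun x : ℝ => if x ≤ 0 then (0:ℂ) else ((Real.sqrt x)⁻¹ : ℂ)) M

/-- Matrix logarithm (with `log 0 = 0` convention on the kernel). -/
noncomputable def mlog {n : Type*} [Fintype n] [DecidableEq n] (M : Matrix n n ℂ) :
    Matrix n n ℂ :=
  mfun (fun x => (Real.log x : ℂ)) M

/-- Complex power `M ^ z` of a positive semidefinite matrix, taken on the support. -/
noncomputable def mcpow {n : Type*} [Fintype n] [DecidableEq n] (z : ℂ)
    (M : Matrix n n ℂ) : Matrix n n ℂ :=
  mfun (fun x : ℝ => if x ≤ 0 then (0:ℂ) else (x : ℂ) ^ z) M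

/-- Projection onto the support of a positive semidefinite matrix. -/
noncomputable def suppProj {n : Type*} [Fintype n] [DecidableEq n] (M : Matrix n n ℂ) :
    Matrix n n ℂ :=
  mfun (fun x : ℝ => if x ≤ 0 then (0:ℂ) else 1) M

/-- Singular values of a (rectangular) complex matrix. -/
noncomputable def singVals {m n : Type*} [Fintype m] [Fintype n] [DecidableEq n]
    (L : Matrix m n ℂ) : n → ℝ :=
  fun i => Real.sqrt ((Matrix.posSemidef_conjTranspose_mul_self L).1.eigenvalues i)

/-- Trace norm (Schatten 1-norm). -/
noncomputable def trNorm {m n : Type*} [Fintype m] [Fintype n] [DecidableEq n]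
    (L : Matrix m n ℂ) : ℝ :=
  ∑ i, singVals L i

/-- Schatten `p`-norm, `p ∈ [1,∞]`. -/
noncomputable def schatten {m n : Type*} [Fintype m] [Fintype n] [DecidableEq n]
    (p : ℝ≥0∞) (L : Matrix m n ℂ) : ℝ :=
  if p = ∞ then ⨆ i, singVals L i
  else (∑ i, singVals L i ^ p.toReal) ^ (1 / p.toReal)

/-- Operator norm (largest singular value). -/
noncomputable def opNorm {m n : Type*} [Fintype m] [Fintype n] [DecidableEq n]
    (L : Matrix m n ℂ) : ℝ :=
  ⨆ i, singVals L i

/-- Quantum relative entropy `D(ρ‖σ) = tr(ρ (log ρ - log σ))`. -/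
noncomputable def relEnt {n : Type*} [Fintype n] [DecidableEq n]
    (ρ σ : Matrix n n ℂ) : ℝ :=
  ((ρ * (mlog ρ - mlog σ)).trace).re

/-- Von Neumann entropy. -/
noncomputable def vnEnt {n : Type*} [Fintype n] [DecidableEq n]
    (ρ : Matrix n n ℂ) : ℝ :=
  -((ρ * mlog ρ).trace).re

/-- Fidelity `F(ρ,σ) = ‖√ρ √σ‖₁`. -/
noncomputable def fid {n : Type*} [Fintype n] [DecidableEq n]
    (ρ σ : Matrix n n ℂ) : ℝ :=
  trNorm (msqrt ρ * msqrt σ)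

/-- `supp ρ ⊆ supp σ`, expressed via kernels (for PSD matrices). -/
def suppLE {n : Type*} [Fintype n] (ρ σ : Matrix n n ℂ) : Prop :=
  ∀ v, σ.mulVec v = 0 → ρ.mulVec v = 0

/-- Trace-preserving linear map. -/
def IsTP {m n : Type*} [Fintype m] [Fintype n]
    (Φ : Matrix m m ℂ →ₗ[ℂ] Matrix n n ℂ) : Prop :=
  ∀ M, (Φ M).trace = M.trace

/-- Completely positive map, via the Kraus representation. -/
def IsCP {m n : Type*} [Fintype m] [Fintype n]
    (Φ : Matrix m m ℂ →ₗ[ℂ] Matrix n n ℂ) : Prop :=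
  ∃ (k : ℕ) (K : Fin k → Matrix n m ℂ), ∀ M, Φ M = ∑ i, K i * M * (K i)ᴴ

/-- `Φdag` is the adjoint of `Φ` w.r.t. the Hilbert–Schmidt inner product. -/
def IsAdjointPair {m n : Type*} [Fintype m] [Fintype n]
    (Φ : Matrix m m ℂ →ₗ[ℂ] Matrix n n ℂ)
    (Φdag : Matrix n n ℂ →ₗ[ℂ] Matrix m m ℂ) : Prop :=
  ∀ X Y, ((Xᴴ * Φ Y).trace) = (((Φdag X)ᴴ * Y).trace)

/-- Petz recovery map `P_{σ,N}` where `τ = N(σ)` and `Φdag = N†`. -/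
noncomputable def petz {m n : Type*} [Fintype m] [DecidableEq m] [Fintype n] [DecidableEq n]
    (σ : Matrix m m ℂ) (τ : Matrix n n ℂ)
    (Φdag : Matrix n n ℂ →ₗ[ℂ] Matrix m m ℂ) (X : Matrix n n ℂ) : Matrix m m ℂ :=
  msqrt σ * Φdag (minvsqrt τ * X * minvsqrt τ) * msqrt σ

/-- Rotated Petz recovery map `R^t_{σ,N}`. -/
noncomputable def rotPetz {m n : Type*} [Fintype m] [DecidableEq m] [Fintype n] [DecidableEq n]
    (t : ℝ) (σ : Matrix m m ℂ) (τ : Matrix n n ℂ)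
    (Φdag : Matrix n n ℂ →ₗ[ℂ] Matrix m m ℂ) (X : Matrix n n ℂ) : Matrix m m ℂ :=
  mcpow (-(Complex.I * t)) σ *
    petz σ τ Φdag (mcpow (Complex.I * t) τ * X * mcpow (-(Complex.I * t)) τ) *
    mcpow (Complex.I * t) σ

/-- Partial trace over the second (environment) factor. -/
noncomputable def ptraceE {b e : Type*} [Fintype e]
    (M : Matrix (b × e) (b × e) ℂ) : Matrix b b ℂ :=
  fun i j => ∑ k : e, M (i, k) (j, k)

/-- The density `β₀(t) = (π/2) (cosh(π t) + 1)⁻¹`. -/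
noncomputable def beta0 (t : ℝ) : ℝ :=
  Real.pi / 2 * (Real.cosh (Real.pi * t) + 1)⁻¹


/-!
By the Stinespring form of the channel, its adjoint is `N†(Y) = U† (Y ⊗ 1) U`, so the Petz
recovery of `N(ρ)` factors as `B† B` with `B = (N(ρ)^{1/2} N(σ)^{-1/2} ⊗ 1) U σ^{1/2}`.
The left-hand side is the trace norm of `B √ρ`, and `‖B √ρ‖₁ = ‖√(B†B) √ρ‖₁ = F(ρ, B†B)`:
both `(B √ρ)† (B √ρ)` and `(√(B†B) √ρ)† (√(B†B) √ρ)` equal `√ρ B†B √ρ`, singular values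
depend only on `X† X`, and `X† X`, `X X†` have the same characteristic polynomial.
-/

section FunctionalCalculus

variable {n : Type*} [Fintype n] [DecidableEq n]

theorem isHermitian_mfun (f : ℝ → ℂ) (hf : ∀ x, star (f x) = f x) (M : Matrix n n ℂ) :
    (mfun f M).IsHermitian := by
  unfold mfun
  split_ifs with hM
  · exact isHermitian_mul_mul_conjTranspose _
      (isHermitian_diagonal_of_self_adjoint _ (funext fun i => hf _))
  · exact isHermitian_zero

theorem isHermitian_msqrt (M : Matrix n n ℂ) : (msqrt M).IsHermitian :=
  isHermitian_mfun _ (fun x => by simp) M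

theorem isHermitian_minvsqrt (M : Matrix n n ℂ) : (minvsqrt M).IsHermitian :=
  isHermitian_mfun _ (fun x => by split <;> simp) M

theorem mfun_mul_mfun (f g : ℝ → ℂ) {M : Matrix n n ℂ} (hM : M.IsHermitian) :
    mfun f M * mfun g M = mfun (f * g) M := by
  simp only [mfun, dif_pos hM, mul_assoc, Pi.mul_apply]
  rw [← mul_assoc (star _) _, hM.eigenvectorUnitary.2.1, one_mul, ← mul_assoc (diagonal _),
    diagonal_mul_diagonal]

theorem msqrt_mul_self {M : Matrix n n ℂ} (hM : M.PosSemidef) : msqrt M * msqrt M = M := by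
  rw [msqrt, mfun_mul_mfun _ _ hM.1, mfun, dif_pos hM.1]
  conv_rhs => rw [hM.1.spectral_theorem, Unitary.conjStarAlgAut_apply]
  congr 2
  refine congrArg diagonal (funext fun i => ?_)
  simp [← Complex.ofReal_mul, Real.mul_self_sqrt (hM.eigenvalues_nonneg i)]

end FunctionalCalculus

section TraceNorm

variable {n : Type*} [Fintype n] [DecidableEq n]

theorem trNorm_eq_of_charpoly_eq {m m' : Type*} [Fintype m] [Fintype m']
    {X : Matrix m n ℂ} {Y : Matrix m' n ℂ} (h : (Xᴴ * X).charpoly = (Yᴴ * Y).charpoly) :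
    trNorm X = trNorm Y := by
  unfold trNorm singVals
  rw [(IsHermitian.eigenvalues_eq_eigenvalues_iff _ _).mpr h]

theorem trNorm_conjTranspose (A : Matrix n n ℂ) : trNorm Aᴴ = trNorm A :=
  trNorm_eq_of_charpoly_eq (by rw [conjTranspose_conjTranspose, charpoly_mul_comm])

theorem trNorm_mul_msqrt_eq_fid {m : Type*} [Fintype m] (ρ : Matrix n n ℂ)
    (B : Matrix m n ℂ) : trNorm (B * msqrt ρ) = fid ρ (Bᴴ * B) := by
  have hω : (Bᴴ * B).PosSemidef := posSemidef_conjTranspose_mul_self B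
  have hsq : (B * msqrt ρ)ᴴ * (B * msqrt ρ) =
      (msqrt (Bᴴ * B) * msqrt ρ)ᴴ * (msqrt (Bᴴ * B) * msqrt ρ) := by
    rw [conjTranspose_mul, conjTranspose_mul, (isHermitian_msqrt ρ).eq,
      (isHermitian_msqrt (Bᴴ * B)).eq, Matrix.mul_assoc, ← Matrix.mul_assoc Bᴴ,
      Matrix.mul_assoc (msqrt ρ), ← Matrix.mul_assoc (msqrt (Bᴴ * B)), msqrt_mul_self hω]
  rw [fid, ← trNorm_conjTranspose, conjTranspose_mul, (isHermitian_msqrt ρ).eq,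
    (isHermitian_msqrt (Bᴴ * B)).eq]
  exact trNorm_eq_of_charpoly_eq (by rw [hsq])

end TraceNorm

section PartialTrace

variable {b e : Type*} [Fintype e]

theorem ptraceE_eq_sum_submatrix (Z : Matrix (b × e) (b × e) ℂ) :
    ptraceE Z = ∑ k, Z.submatrix (fun i => (i, k)) (fun i => (i, k)) := by
  ext i j
  simp [ptraceE, Matrix.sum_apply]

theorem Matrix.PosSemidef.ptraceE [Fintype b] {Z : Matrix (b × e) (b × e) ℂ}
    (hZ : Z.PosSemidef) : (ptraceE Z).PosSemidef := by
  rw [ptraceE_eq_sum_submatrix]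
  exact posSemidef_sum _ fun k _ => hZ.submatrix _

theorem trace_mul_ptraceE [Fintype b] [DecidableEq e] (X : Matrix b b ℂ)
    (Z : Matrix (b × e) (b × e) ℂ) :
    (X * ptraceE Z).trace = ((X ⊗ₖ (1 : Matrix e e ℂ)) * Z).trace := by
  simp only [trace, diag_apply, mul_apply, ptraceE, Finset.mul_sum, kroneckerMap_apply,
    one_apply, mul_ite, mul_one, mul_zero, ite_mul, zero_mul, Fintype.sum_prod_type,
    Finset.sum_ite_eq, Finset.mem_univ, ↓reduceIte]
  exact Finset.sum_congr rfl fun i _ => Finset.sum_comm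

end PartialTrace

theorem adjoint_eq_of_stinespring {a b e : Type*} [Fintype a] [Fintype b] [Fintype e]
    [DecidableEq e] {Φ : Matrix a a ℂ →ₗ[ℂ] Matrix b b ℂ}
    {Φdag : Matrix b b ℂ →ₗ[ℂ] Matrix a a ℂ}
    {U : Matrix (b × e) a ℂ} (hext : ∀ M, Φ M = ptraceE (U * M * Uᴴ))
    (hadj : IsAdjointPair Φ Φdag) (X : Matrix b b ℂ) :
    Φdag X = Uᴴ * (X ⊗ₖ (1 : Matrix e e ℂ)) * U := by
  rw [← conjTranspose_inj, ext_iff_trace_mul_right]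
  intro Y
  rw [← hadj, hext, trace_mul_ptraceE, conjTranspose_mul, conjTranspose_mul,
    conjTranspose_conjTranspose, conjTranspose_kronecker, conjTranspose_one]
  simp only [Matrix.mul_assoc]
  rw [trace_mul_comm Uᴴ]
  simp only [Matrix.mul_assoc]

theorem petz_eq_conjTranspose_mul_self {a b e : Type*} [Fintype a] [DecidableEq a] [Fintype b]
    [DecidableEq b] [Fintype e] [DecidableEq e] {Φdag : Matrix b b ℂ →ₗ[ℂ] Matrix a a ℂ}
    {U : Matrix (b × e) a ℂ} (hdag : ∀ Y, Φdag Y = Uᴴ * (Y ⊗ₖ (1 : Matrix e e ℂ)) * U)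
    (σ : Matrix a a ℂ) (τ : Matrix b b ℂ) {X : Matrix b b ℂ} (hX : X.PosSemidef) :
    petz σ τ Φdag X =
      (((msqrt X * minvsqrt τ) ⊗ₖ (1 : Matrix e e ℂ)) * U * msqrt σ)ᴴ *
        (((msqrt X * minvsqrt τ) ⊗ₖ (1 : Matrix e e ℂ)) * U * msqrt σ) := by
  have hG : (msqrt X * minvsqrt τ)ᴴ * (msqrt X * minvsqrt τ) = minvsqrt τ * X * minvsqrt τ := by
    rw [conjTranspose_mul, (isHermitian_msqrt X).eq, (isHermitian_minvsqrt τ).eq,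
      Matrix.mul_assoc, ← Matrix.mul_assoc (msqrt X), msqrt_mul_self hX, Matrix.mul_assoc]
  have hK : ((msqrt X * minvsqrt τ) ⊗ₖ (1 : Matrix e e ℂ))ᴴ *
      ((msqrt X * minvsqrt τ) ⊗ₖ (1 : Matrix e e ℂ)) = (minvsqrt τ * X * minvsqrt τ) ⊗ₖ 1 := by
    rw [conjTranspose_kronecker, conjTranspose_one, ← mul_kronecker_mul, hG, one_mul]
  rw [petz, hdag, ← hK]
  simp only [conjTranspose_mul, (isHermitian_msqrt σ).eq, Matrix.mul_assoc]

theorem renyi_half_eq_petz_fidelity_general {a b e : ℕ}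
    (ρ σ : Matrix (Fin a) (Fin a) ℂ)
    (hρ : ρ.PosSemidef)
    (Φ : Matrix (Fin a) (Fin a) ℂ →ₗ[ℂ] Matrix (Fin b) (Fin b) ℂ)
    (U : Matrix (Fin b × Fin e) (Fin a) ℂ)
    (hext : ∀ M, Φ M = ptraceE (U * M * Uᴴ))
    (Φdag : Matrix (Fin b) (Fin b) ℂ →ₗ[ℂ] Matrix (Fin a) (Fin a) ℂ)
    (hadj : IsAdjointPair Φ Φdag) :
    -2 * Real.log (trNorm
        (((msqrt (Φ ρ) * minvsqrt (Φ σ)) ⊗ₖ (1 : Matrix (Fin e) (Fin e) ℂ)) *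
          U * msqrt σ * msqrt ρ)) =
      -2 * Real.log (fid ρ (petz σ (Φ σ) Φdag (Φ ρ))) := by
  have hΦρ : (Φ ρ).PosSemidef := hext ρ ▸ (hρ.mul_mul_conjTranspose_same U).ptraceE
  rw [petz_eq_conjTranspose_mul_self (adjoint_eq_of_stinespring hext hadj) σ (Φ σ) hΦρ,
    trNorm_mul_msqrt_eq_fid]

/-- The `α = 1/2` Rényi relative entropy difference equals `-2 log F(ρ, P_{σ,N}(N(ρ)))`. -/
theorem renyi_half_eq_petz_fidelity {a b e : ℕ}
    (ρ σ : Matrix (Fin a) (Fin a) ℂ)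
    (hρ : ρ.PosSemidef) (hρ1 : ρ.trace = 1)
    (hσ : σ.PosSemidef) (hσ1 : σ.trace = 1) (hsupp : suppLE ρ σ)
    (Φ : Matrix (Fin a) (Fin a) ℂ →ₗ[ℂ] Matrix (Fin b) (Fin b) ℂ)
    (U : Matrix (Fin b × Fin e) (Fin a) ℂ) (hU : Uᴴ * U = 1)
    (hext : ∀ M, Φ M = ptraceE (U * M * Uᴴ))
    (Φdag : Matrix (Fin b) (Fin b) ℂ →ₗ[ℂ] Matrix (Fin a) (Fin a) ℂ)
    (hadj : IsAdjointPair Φ Φdag) :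
    -2 * Real.log (trNorm
        (((msqrt (Φ ρ) * minvsqrt (Φ σ)) ⊗ₖ (1 : Matrix (Fin e) (Fin e) ℂ)) *
          U * msqrt σ * msqrt ρ)) =
      -2 * Real.log (fid ρ (petz σ (Φ σ) Φdag (Φ ρ))) :=
  renyi_half_eq_petz_fidelity_general ρ σ hρ Φ U hext Φdag hadj
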